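/- For every integer m ≥ 0 and complex x with all denominators nonzero: (x;q)_{m+1} · ∑_{k=0}^m [m+k choose k]_q q^k / (xq;q)_k + (1/x;q)_{m+1} · ∑_{k=0}^m [m+k choose k]_q q^k / (q/x;q)_k = (x;q)_{m+1} (1/x;q)_{m+1}. -/

import Mathlib

noncomputable def qPoch (a q : ℂ) (n : ℕ) : ℂ := ∏ i ∈ Finset.range n, (1 - a * q ^ i)

noncomputable def qPochInf (a q : ℂ) : ℂ := ∏' i : ℕ, (1 - a * q ^ i)

noncomputable def qBinom (q : ℂ) (m k : ℕ) : ℂ :=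
  if k ≤ m then qPoch q q m / (qPoch q q k * qPoch q q (m - k)) else 0

/-!
Clearing denominators, `(z;q)_{m+1} ∑_k [m+k, k]_q q^k / (zq;q)_k = (1 - z) F_m(z)` with the
polynomial `F_m(z) = ∑_k [m+k, k]_q q^k (zq^{k+1};q)_{m-k}`. The q-Pascal rules give the recurrence
`z F_{m+1}(z) = (z - q^{m+1})(1 - zq^{m+1}) F_m(z) + q^{m+1} [2m+1, m]_q (1 + z)`,
whose inhomogeneous term comes out of a telescoping sum. Multiplied by `(1 - z)/z`, the homogeneous
factor becomes `(1 - zq^{m+1})(1 - z⁻¹q^{m+1})`, invariant under `z ↦ z⁻¹`, while the inhomogeneous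
term becomes `q^{m+1} [2m+1, m]_q (z⁻¹ - z)`, which changes sign. Hence
`G_m(x) = (1 - x) F_m(x) + (1 - x⁻¹) F_m(x⁻¹)` is multiplied at each step by exactly the factor by
which `(x;q)_{m+1} (x⁻¹;q)_{m+1}` grows, and both start at `(1 - x)(1 - x⁻¹)`.
-/

open Finset

variable {q : ℂ}

lemma qPoch_zero (a : ℂ) : qPoch a q 0 = 1 := by simp [qPoch]

lemma qPoch_succ (a : ℂ) (n : ℕ) : qPoch a q (n + 1) = qPoch a q n * (1 - a * q ^ n) :=
  prod_range_succ _ _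

lemma qPoch_add (a : ℂ) (s t : ℕ) : qPoch a q (s + t) = qPoch a q s * qPoch (a * q ^ s) q t := by
  simp only [qPoch, prod_range_add, pow_add, mul_assoc]

lemma qPoch_succ' (a : ℂ) (n : ℕ) : qPoch a q (n + 1) = (1 - a) * qPoch (a * q) q n := by
  rw [add_comm, qPoch_add, pow_one, qPoch_succ, qPoch_zero, pow_zero, mul_one, one_mul]

lemma qPoch_self_ne_zero_of_norm_lt_one (hq : ‖q‖ < 1) (n : ℕ) : qPoch q q n ≠ 0 := by
  refine prod_ne_zero_iff.mpr fun i _ => sub_ne_zero.mpr fun h => ?_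
  have : ‖q * q ^ i‖ < 1 := by
    rw [← pow_succ', norm_pow]
    exact pow_lt_one₀ (norm_nonneg q) hq i.succ_ne_zero
  rw [← h, norm_one] at this
  exact lt_irrefl 1 this

lemma qBinom_add_eq_div (a b : ℕ) :
    qBinom q (a + b) a = qPoch q q (a + b) / (qPoch q q a * qPoch q q b) := by
  rw [qBinom, if_pos (Nat.le_add_right a b), Nat.add_sub_cancel_left]

lemma qBinom_symm_add (a b : ℕ) : qBinom q (a + b) a = qBinom q (a + b) b := by
  rw [qBinom_add_eq_div, add_comm a b, qBinom_add_eq_div, mul_comm]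

lemma qBinom_eq_zero_of_lt {n k : ℕ} (h : n < k) : qBinom q n k = 0 :=
  if_neg (Nat.not_le.mpr h)

lemma qBinom_self (hq : ∀ n, qPoch q q n ≠ 0) (n : ℕ) : qBinom q n n = 1 := by
  rw [qBinom, if_pos le_rfl, Nat.sub_self, qPoch_zero, mul_one, div_self (hq n)]

lemma qBinom_succ_succ (hq : ∀ n, qPoch q q n ≠ 0) (n k : ℕ) :
    qBinom q (n + 1) (k + 1) = qBinom q n k + q ^ (k + 1) * qBinom q n (k + 1) := by
  rcases lt_trichotomy k n with hlt | rfl | hgt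
  · obtain ⟨a, rfl⟩ := Nat.exists_eq_add_of_lt hlt
    have hk := mul_ne_zero_iff.mp (qPoch_succ q k ▸ hq (k + 1))
    have ha := mul_ne_zero_iff.mp (qPoch_succ q a ▸ hq (a + 1))
    rw [qBinom, qBinom, qBinom, if_pos (by omega), if_pos (by omega), if_pos (by omega),
      show k + a + 1 + 1 - (k + 1) = a + 1 by omega, show k + a + 1 - k = a + 1 by omega,
      show k + a + 1 - (k + 1) = a by omega, qPoch_succ _ (k + a + 1), qPoch_succ _ k,
      qPoch_succ _ a]
    field_simp [hk.1, hk.2, ha.1, ha.2]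
    ring
  · rw [qBinom_self hq, qBinom_self hq, qBinom_eq_zero_of_lt (Nat.lt_succ_self k)]
    ring
  · rw [qBinom_eq_zero_of_lt (by omega : n + 1 < k + 1), qBinom_eq_zero_of_lt hgt,
      qBinom_eq_zero_of_lt (by omega : n < k + 1)]
    ring

lemma qBinom_succ_succ' (hq : ∀ n, qPoch q q n ≠ 0) (n k : ℕ) :
    qBinom q (n + 1) (k + 1) = q ^ (n - k) * qBinom q n k + qBinom q n (k + 1) := by
  rcases lt_trichotomy k n with hlt | rfl | hgt
  · obtain ⟨a, rfl⟩ := Nat.exists_eq_add_of_lt hlt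
    have hk := mul_ne_zero_iff.mp (qPoch_succ q k ▸ hq (k + 1))
    have ha := mul_ne_zero_iff.mp (qPoch_succ q a ▸ hq (a + 1))
    rw [qBinom, qBinom, qBinom, if_pos (by omega), if_pos (by omega), if_pos (by omega),
      show k + a + 1 + 1 - (k + 1) = a + 1 by omega, show k + a + 1 - k = a + 1 by omega,
      show k + a + 1 - (k + 1) = a by omega, qPoch_succ _ (k + a + 1), qPoch_succ _ k,
      qPoch_succ _ a]
    field_simp [hk.1, hk.2, ha.1, ha.2]
    ring
  · rw [qBinom_self hq, qBinom_self hq, qBinom_eq_zero_of_lt (Nat.lt_succ_self k)]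
    simp
  · rw [qBinom_eq_zero_of_lt (by omega : n + 1 < k + 1), qBinom_eq_zero_of_lt hgt,
      qBinom_eq_zero_of_lt (by omega : n < k + 1)]
    ring

noncomputable def clearedSum (q z : ℂ) (m : ℕ) : ℂ :=
  ∑ k ∈ range (m + 1), qBinom q (m + k) k * q ^ k * qPoch (z * q ^ (k + 1)) q (m - k)

lemma qPoch_mul_sum_eq_clearedSum (z : ℂ) (m : ℕ) (hz : ∀ k ≤ m, qPoch (z * q) q k ≠ 0) :
    qPoch (z * q) q m * ∑ k ∈ range (m + 1), qBinom q (m + k) k * q ^ k / qPoch (z * q) q k =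
      clearedSum q z m := by
  rw [clearedSum, mul_sum]
  refine sum_congr rfl fun k hk => ?_
  have hkm : k ≤ m := Nat.lt_succ_iff.mp (mem_range.mp hk)
  rw [← Nat.add_sub_cancel' hkm, qPoch_add, Nat.add_sub_cancel_left, mul_assoc z, ← pow_succ']
  field_simp [hz k hkm]

lemma sum_pow_mul_qPoch_mul_qBinom_eq (hq : ∀ n, qPoch q q n ≠ 0) (z : ℂ) (n : ℕ) :
    ∑ k ∈ range (n + 1), q ^ k * qPoch (z * q ^ (k + 1)) q (n - k) *
        (z * qBinom q (n + k) (n + 1) + qBinom q (n + k) k) = qBinom q (n + (n + 1)) n := by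
  let T k := qPoch (z * q ^ k) q (n + 1 - k) * qBinom q (n + k) (n + 1)
  have htele : ∀ k ∈ range (n + 1), q ^ k * qPoch (z * q ^ (k + 1)) q (n - k) *
      (z * qBinom q (n + k) (n + 1) + qBinom q (n + k) k) = T (k + 1) - T k := by
    intro k hk
    have hkn : k ≤ n := Nat.lt_succ_iff.mp (mem_range.mp hk)
    simp only [T]
    rw [Nat.add_sub_add_right, show n + 1 - k = n - k + 1 by omega, qPoch_succ', mul_assoc z,
      ← pow_succ, ← add_assoc, qBinom_succ_succ' hq, Nat.add_sub_cancel_left, ← qBinom_symm_add n k]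
    ring
  rw [sum_congr rfl htele, sum_range_sub]
  simp only [T, Nat.sub_self, qPoch_zero, one_mul, add_zero, qBinom_eq_zero_of_lt (Nat.lt_succ_self n),
    mul_zero, sub_zero]
  exact (qBinom_symm_add n (n + 1)).symm

lemma mul_clearedSum_succ (hq : ∀ n, qPoch q q n ≠ 0) (z : ℂ) (m : ℕ) :
    z * clearedSum q z (m + 1) = (z - q ^ (m + 1)) * (1 - z * q ^ (m + 1)) * clearedSum q z m +
      q ^ (m + 1) * qBinom q (m + (m + 1)) m * (1 + z) := by
  have hterm : ∀ k ∈ range (m + 1),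
      z * (qBinom q (m + 1 + k) k * q ^ k * qPoch (z * q ^ (k + 1)) q (m + 1 - k)) =
        (z - q ^ (m + 1)) * (1 - z * q ^ (m + 1)) *
            (qBinom q (m + k) k * q ^ k * qPoch (z * q ^ (k + 1)) q (m - k)) +
          q ^ (m + 1) * (1 - z * q ^ (m + 1)) * (q ^ k * qPoch (z * q ^ (k + 1)) q (m - k) *
            (z * qBinom q (m + k) (m + 1) + qBinom q (m + k) k)) := by
    intro k hk
    have hkm : k ≤ m := Nat.lt_succ_iff.mp (mem_range.mp hk)
    have hpascal : qBinom q (m + 1 + k) k =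
        qBinom q (m + k) k + q ^ (m + 1) * qBinom q (m + k) (m + 1) := by
      rw [← qBinom_symm_add (m + 1) k, ← qBinom_symm_add m k, show m + 1 + k = m + k + 1 by ring,
        qBinom_succ_succ hq]
    rw [show m + 1 - k = m - k + 1 by omega, qPoch_succ, mul_assoc z, ← pow_add,
      show k + 1 + (m - k) = m + 1 by omega, hpascal]
    ring
  have hmiddle : qBinom q (m + 1 + (m + 1)) (m + 1) =
      (1 + q ^ (m + 1)) * qBinom q (m + (m + 1)) m := by
    rw [show m + 1 + (m + 1) = m + (m + 1) + 1 by ring, qBinom_succ_succ hq,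
      ← qBinom_symm_add m (m + 1)]
    ring
  rw [clearedSum, clearedSum, mul_sum, sum_range_succ, sum_congr rfl hterm, sum_add_distrib,
    ← mul_sum, ← mul_sum, sum_pow_mul_qPoch_mul_qBinom_eq hq, hmiddle, Nat.sub_self, qPoch_zero]
  ring

lemma one_sub_mul_clearedSum_succ (hq : ∀ n, qPoch q q n ≠ 0) {z : ℂ} (hz : z ≠ 0) (m : ℕ) :
    (1 - z) * clearedSum q z (m + 1) =
      (1 - z * q ^ (m + 1)) * (1 - z⁻¹ * q ^ (m + 1)) * ((1 - z) * clearedSum q z m) +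
        q ^ (m + 1) * qBinom q (m + (m + 1)) m * (z⁻¹ - z) := by
  have h := mul_clearedSum_succ hq z m
  field_simp
  linear_combination (1 - z) * h

lemma one_sub_mul_clearedSum_add_inv (hq : ∀ n, qPoch q q n ≠ 0) {x : ℂ} (hx : x ≠ 0) (m : ℕ) :
    (1 - x) * clearedSum q x m + (1 - x⁻¹) * clearedSum q x⁻¹ m =
      qPoch x q (m + 1) * qPoch x⁻¹ q (m + 1) := by
  induction m with
  | zero =>
    simp only [clearedSum, zero_add, range_one, sum_singleton, qBinom_self hq, pow_zero,
      Nat.sub_self, qPoch_zero, qPoch_succ, one_mul, mul_one]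
    field_simp
    ring
  | succ m ih =>
    rw [one_sub_mul_clearedSum_succ hq hx, one_sub_mul_clearedSum_succ hq (inv_ne_zero hx),
      inv_inv, qPoch_succ x, qPoch_succ x⁻¹]
    linear_combination (1 - x * q ^ (m + 1)) * (1 - x⁻¹ * q ^ (m + 1)) * ih

theorem stmt_13_general (q x : ℂ) (m : ℕ) (hq1 : ‖q‖ < 1) (hx0 : x ≠ 0)
    (h1 : ∀ k, qPoch (x * q) q k ≠ 0) (h2 : ∀ k, qPoch (q / x) q k ≠ 0) :
    qPoch x q (m + 1) *
        ∑ k ∈ Finset.range (m + 1), qBinom q (m + k) k * q ^ k / qPoch (x * q) q k +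
      qPoch (1 / x) q (m + 1) *
        ∑ k ∈ Finset.range (m + 1), qBinom q (m + k) k * q ^ k / qPoch (q / x) q k =
    qPoch x q (m + 1) * qPoch (1 / x) q (m + 1) := by
  have hq := qPoch_self_ne_zero_of_norm_lt_one hq1
  rw [div_eq_inv_mul q x] at h2
  rw [div_eq_inv_mul q x, one_div, qPoch_succ' x, qPoch_succ' x⁻¹, mul_assoc, mul_assoc,
    qPoch_mul_sum_eq_clearedSum x m fun k _ => h1 k,
    qPoch_mul_sum_eq_clearedSum x⁻¹ m fun k _ => h2 k, ← qPoch_succ', ← qPoch_succ']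
  exact one_sub_mul_clearedSum_add_inv hq hx0 m

theorem stmt_13 (q x : ℂ) (m : ℕ) (hq0 : 0 < ‖q‖) (hq1 : ‖q‖ < 1) (hx0 : x ≠ 0)
    (h1 : ∀ k, qPoch (x * q) q k ≠ 0) (h2 : ∀ k, qPoch (q / x) q k ≠ 0) :
    qPoch x q (m + 1) *
        ∑ k ∈ Finset.range (m + 1), qBinom q (m + k) k * q ^ k / qPoch (x * q) q k +
      qPoch (1 / x) q (m + 1) *
        ∑ k ∈ Finset.range (m + 1), qBinom q (m + k) k * q ^ k / qPoch (q / x) q k =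
    qPoch x q (m + 1) * qPoch (1 / x) q (m + 1) :=
  stmt_13_general q x m hq1 hx0 h1 h2
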